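/- Let t¹, t² be orthonormal vectors in Euclidean three-space ℝ³, n = t¹ × t², m a unit vector, P_m v = v − ⟨v, m⟩ m, and let M be the 2×2 real matrix with entries M_{ik} = ⟨tⁱ, P_m tᵏ⟩ for i, k ∈ {1, 2}. If ⟨tⁱ, n⟩ = 0 for i = 1, 2 (which holds automatically since n = t¹ × t²), then every entry of M − I satisfies |M_{ik} − δ_{ik}| ≤ ‖n − m‖² for i, k ∈ {1, 2}, where δ_{ik} is the Kronecker delta; in particular the operator norm satisfies ‖M − I‖ ≤ 2‖n − m‖². -/

import Mathlib

open scoped RealInnerProductSpace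

/-- The cross product of two vectors in Euclidean three-space `ℝ³`. -/
noncomputable def cross3 (a b : EuclideanSpace ℝ (Fin 3)) : EuclideanSpace ℝ (Fin 3) :=
  (WithLp.equiv 2 (Fin 3 → ℝ)).symm
    ![a 1 * b 2 - a 2 * b 1, a 2 * b 0 - a 0 * b 2, a 0 * b 1 - a 1 * b 0]

/-- The orthogonal projection onto the plane orthogonal to `m`:
`P_m v = v - ⟪v, m⟫ • m`. -/
noncomputable def projPlane (m v : EuclideanSpace ℝ (Fin 3)) : EuclideanSpace ℝ (Fin 3) :=
  v - ⟪v, m⟫ • m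

/-!
Write `a = ⟪t¹, m⟫`, `b = ⟪t², m⟫`, `c = ⟪n, m⟫`. Since `t¹, t²` are orthonormal,
`M - I = -w wᵀ` with `w = (a, b)`, a rank-one matrix whose entries are bounded by, and whose
operator norm equals, `a² + b²`. As `(t¹, t², n)` is orthonormal, Bessel's inequality gives
`a² + b² ≤ 1 - c² ≤ 2 - 2c = ‖n - m‖²`.
-/

open Matrix WithLp InnerProductSpace

lemma cross3_eq_toLp_crossProduct (a b : EuclideanSpace ℝ (Fin 3)) :
    cross3 a b = toLp 2 (ofLp a ⨯₃ ofLp b) := by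
  ext i
  fin_cases i <;> simp [cross3, cross_apply]

lemma inner_cross3_cross3 (a b c d : EuclideanSpace ℝ (Fin 3)) :
    ⟪cross3 a b, cross3 c d⟫ = ⟪a, c⟫ * ⟪b, d⟫ - ⟪a, d⟫ * ⟪b, c⟫ := by
  simp only [cross3_eq_toLp_crossProduct, EuclideanSpace.inner_eq_star_dotProduct, star_trivial,
    cross_dot_cross, dotProduct_comm]

lemma inner_self_cross3 (a b : EuclideanSpace ℝ (Fin 3)) : ⟪a, cross3 a b⟫ = 0 := by
  rw [cross3_eq_toLp_crossProduct, EuclideanSpace.inner_eq_star_dotProduct, star_trivial,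
    ofLp_toLp, dotProduct_comm, dot_self_cross]

lemma inner_cross3_self (a b : EuclideanSpace ℝ (Fin 3)) : ⟪b, cross3 a b⟫ = 0 := by
  rw [cross3_eq_toLp_crossProduct, EuclideanSpace.inner_eq_star_dotProduct, star_trivial,
    ofLp_toLp, dotProduct_comm, dot_cross_self]

lemma norm_cross3_sq (a b : EuclideanSpace ℝ (Fin 3)) :
    ‖cross3 a b‖ ^ 2 = ‖a‖ ^ 2 * ‖b‖ ^ 2 - ⟪a, b⟫ ^ 2 := by
  rw [← real_inner_self_eq_norm_sq, inner_cross3_cross3, real_inner_self_eq_norm_sq,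
    real_inner_self_eq_norm_sq, real_inner_comm a b]
  ring

lemma orthonormal_pair {E : Type*} [NormedAddCommGroup E] [InnerProductSpace ℝ E] {u v : E}
    (hu : ‖u‖ = 1) (hv : ‖v‖ = 1) (huv : ⟪u, v⟫ = 0) : Orthonormal ℝ ![u, v] := by
  rw [orthonormal_iff_ite]
  intro i j
  fin_cases i <;> fin_cases j <;> simp [hu, hv, huv, real_inner_comm u]

lemma orthonormal_cross3 {t₁ t₂ : EuclideanSpace ℝ (Fin 3)} (h₁ : ‖t₁‖ = 1) (h₂ : ‖t₂‖ = 1)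
    (h₁₂ : ⟪t₁, t₂⟫ = 0) : Orthonormal ℝ ![t₁, t₂, cross3 t₁ t₂] := by
  have hn : ‖cross3 t₁ t₂‖ = 1 := by
    refine (pow_eq_one_iff_of_nonneg (norm_nonneg _) two_ne_zero).mp ?_
    rw [norm_cross3_sq, h₁, h₂, h₁₂]
    norm_num
  rw [orthonormal_iff_ite]
  intro i j
  fin_cases i <;> fin_cases j <;>
    simp [inner_self_cross3, inner_cross3_self, real_inner_comm t₁ t₂,
      real_inner_comm t₁ (cross3 t₁ t₂), real_inner_comm t₂ (cross3 t₁ t₂), h₁, h₂, h₁₂, hn]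

lemma sq_inner_add_sq_inner_le_norm_sub_sq {E : Type*} [NormedAddCommGroup E]
    [InnerProductSpace ℝ E] {e₁ e₂ n m : E} (he : Orthonormal ℝ ![e₁, e₂, n]) (hm : ‖m‖ = 1) :
    ⟪e₁, m⟫ ^ 2 + ⟪e₂, m⟫ ^ 2 ≤ ‖n - m‖ ^ 2 := by
  have bessel : ⟪e₁, m⟫ ^ 2 + ⟪e₂, m⟫ ^ 2 + ⟪n, m⟫ ^ 2 ≤ 1 := by
    simpa [Fin.sum_univ_three, hm] using he.sum_inner_products_le m (s := Finset.univ)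
  have hn : ‖n‖ = 1 := he.1 2
  rw [norm_sub_sq_real, hn, hm]
  nlinarith [sq_nonneg (1 - ⟪n, m⟫)]

lemma inner_projPlane (m u v : EuclideanSpace ℝ (Fin 3)) :
    ⟪u, projPlane m v⟫ = ⟪u, v⟫ - ⟪u, m⟫ * ⟪v, m⟫ := by
  rw [projPlane, inner_sub_right, real_inner_smul_right, mul_comm]

lemma of_inner_projPlane_sub_one {ι : Type*} [Fintype ι] [DecidableEq ι]
    {t : ι → EuclideanSpace ℝ (Fin 3)} (ht : Orthonormal ℝ t) (m : EuclideanSpace ℝ (Fin 3)) :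
    Matrix.of (fun i k => ⟪t i, projPlane m (t k)⟫) - 1 =
      -vecMulVec (fun i => ⟪t i, m⟫) (fun i => ⟪t i, m⟫) := by
  ext i k
  simp [inner_projPlane, orthonormal_iff_ite.mp ht, one_apply, vecMulVec_apply]

lemma toEuclideanCLM_vecMulVec {ι : Type*} [Fintype ι] [DecidableEq ι] (x y : ι → ℝ) :
    toEuclideanCLM (𝕜 := ℝ) (vecMulVec x y) = rankOne ℝ (toLp 2 x) (toLp 2 y) := by
  ext z i
  simp [vecMulVec_mulVec, EuclideanSpace.inner_eq_star_dotProduct, mul_comm, dotProduct_comm]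

lemma abs_mul_le_norm_toLp_mul_norm_toLp {ι : Type*} [Fintype ι] (x y : ι → ℝ) (i k : ι) :
    |x i * y k| ≤ ‖toLp 2 x‖ * ‖toLp 2 y‖ := by
  rw [abs_mul]
  exact mul_le_mul (PiLp.norm_apply_le (toLp 2 x) i) (PiLp.norm_apply_le (toLp 2 y) k)
    (abs_nonneg _) (norm_nonneg _)

theorem flattening_jacobian_close_to_id_general
    (t1 t2 m : EuclideanSpace ℝ (Fin 3))
    (ht1 : ‖t1‖ = 1) (ht2 : ‖t2‖ = 1) (ht12 : ⟪t1, t2⟫ = 0) (hm : ‖m‖ = 1) :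
    (∀ i k : Fin 2,
      |(!![⟪t1, projPlane m t1⟫, ⟪t1, projPlane m t2⟫;
           ⟪t2, projPlane m t1⟫, ⟪t2, projPlane m t2⟫] : Matrix (Fin 2) (Fin 2) ℝ) i k
          - (1 : Matrix (Fin 2) (Fin 2) ℝ) i k|
        ≤ ‖cross3 t1 t2 - m‖ ^ 2) ∧
    ‖Matrix.toEuclideanCLM (𝕜 := ℝ) (n := Fin 2)
        ((!![⟪t1, projPlane m t1⟫, ⟪t1, projPlane m t2⟫;
             ⟪t2, projPlane m t1⟫, ⟪t2, projPlane m t2⟫] : Matrix (Fin 2) (Fin 2) ℝ)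
          - 1)‖
      ≤ 2 * ‖cross3 t1 t2 - m‖ ^ 2 := by
  set w : Fin 2 → ℝ := fun i => ⟪![t1, t2] i, m⟫
  have hM : !![⟪t1, projPlane m t1⟫, ⟪t1, projPlane m t2⟫;
      ⟪t2, projPlane m t1⟫, ⟪t2, projPlane m t2⟫] - 1 = -vecMulVec w w := by
    rw [← of_inner_projPlane_sub_one (orthonormal_pair ht1 ht2 ht12) m]
    congr 1
    ext i k
    fin_cases i <;> fin_cases k <;> rfl
  have hw : ‖toLp 2 w‖ ^ 2 ≤ ‖cross3 t1 t2 - m‖ ^ 2 := by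
    simpa [EuclideanSpace.norm_sq_eq, w] using
      sq_inner_add_sq_inner_le_norm_sub_sq (orthonormal_cross3 ht1 ht2 ht12) hm
  refine ⟨fun i k => ?_, ?_⟩
  · rw [← Matrix.sub_apply, hM, neg_apply, abs_neg, vecMulVec_apply]
    exact (abs_mul_le_norm_toLp_mul_norm_toLp w w i k).trans (by rwa [← sq])
  · rw [hM, map_neg, norm_neg, toEuclideanCLM_vecMulVec, norm_rankOne, ← sq]
    linarith [sq_nonneg ‖cross3 t1 t2 - m‖]

/-- For orthonormal `t¹, t²` in `ℝ³` with induced unit normal `n = t¹ × t²`,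
a unit vector `m`, `P_m v = v - ⟪v, m⟫ • m`, and the 2×2 matrix `M` with entries
`M_{ik} = ⟪tⁱ, P_m tᵏ⟫`: if `⟪tⁱ, n⟫ = 0` for `i = 1, 2`, then every entry of `M − I`
satisfies `|M_{ik} − δ_{ik}| ≤ ‖n − m‖²`, and the operator norm satisfies
`‖M − I‖ ≤ 2‖n − m‖²`. -/
theorem flattening_jacobian_close_to_id
    (t1 t2 m : EuclideanSpace ℝ (Fin 3))
    (ht1 : ‖t1‖ = 1) (ht2 : ‖t2‖ = 1) (ht12 : ⟪t1, t2⟫ = 0) (hm : ‖m‖ = 1)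
    (ht1n : ⟪t1, cross3 t1 t2⟫ = 0) (ht2n : ⟪t2, cross3 t1 t2⟫ = 0) :
    (∀ i k : Fin 2,
      |(!![⟪t1, projPlane m t1⟫, ⟪t1, projPlane m t2⟫;
           ⟪t2, projPlane m t1⟫, ⟪t2, projPlane m t2⟫] : Matrix (Fin 2) (Fin 2) ℝ) i k
          - (1 : Matrix (Fin 2) (Fin 2) ℝ) i k|
        ≤ ‖cross3 t1 t2 - m‖ ^ 2) ∧
    ‖Matrix.toEuclideanCLM (𝕜 := ℝ) (n := Fin 2)
        ((!![⟪t1, projPlane m t1⟫, ⟪t1, projPlane m t2⟫;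
             ⟪t2, projPlane m t1⟫, ⟪t2, projPlane m t2⟫] : Matrix (Fin 2) (Fin 2) ℝ)
          - 1)‖
      ≤ 2 * ‖cross3 t1 t2 - m‖ ^ 2 :=
  flattening_jacobian_close_to_id_general t1 t2 m ht1 ht2 ht12 hm
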